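/- arXiv:1512.04152 — 2 statements merged into one kernel-verified Lean document; each statement's English description precedes it below -/
import Mathlib

section
/- The hazard rate of the Frechet distribution with shape parameter α > 1, namely h(x) = α x^{-α-1} exp(-x^{-α}) / (1 - exp(-x^{-α})), satisfies h(x) ≤ 2α for all x > 0. -/
/-! With `t = x ^ (-α)` the hazard rate is `α t / (x (eᵗ - 1))`, so it suffices that
`t ≤ 2 x (eᵗ - 1)`. Since `eᵗ - 1 ≥ t + t² / 2`, this follows from `1 ≤ 2 x + x t`, which holds
because either `x ≥ 1` or `x t = x ^ (1 - α) ≥ 1`. -/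

open Real

lemma frechet_hazard_eq (α : ℝ) {x : ℝ} (hx : 0 < x) :
    α * x ^ (-α - 1) * exp (-x ^ (-α)) / (1 - exp (-x ^ (-α))) =
      α * x ^ (-α) / (x * (exp (x ^ (-α)) - 1)) := by
  have ht : 0 < x ^ (-α) := rpow_pos_of_pos hx _
  have hexp : 1 < exp (x ^ (-α)) := one_lt_exp_iff.mpr ht
  rw [rpow_sub hx, rpow_one, exp_neg]
  field_simp

lemma le_two_mul_mul_exp_sub_one {c t : ℝ} (hc : 0 ≤ c) (ht : 0 ≤ t) (h : 1 ≤ 2 * c + c * t) :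
    t ≤ 2 * c * (exp t - 1) := by
  have hquad := quadratic_le_exp_of_nonneg ht
  calc t ≤ t * (2 * c + c * t) := le_mul_of_one_le_right ht h
    _ = 2 * c * (t + t ^ 2 / 2) := by ring
    _ ≤ 2 * c * (exp t - 1) := by gcongr; linarith

lemma one_le_two_mul_add_mul_rpow_neg {α x : ℝ} (hα : 1 ≤ α) (hx : 0 < x) :
    1 ≤ 2 * x + x * x ^ (-α) := by
  have hxt : 0 ≤ x * x ^ (-α) := by positivity
  rcases le_total 1 x with h1x | hx1
  · linarith
  · have : x * x ^ (-α) = x ^ (1 - α) := by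
      rw [sub_eq_add_neg, rpow_add hx, rpow_one]
    have : 1 ≤ x * x ^ (-α) := this ▸ one_le_rpow_of_pos_of_le_one_of_nonpos hx hx1 (by linarith)
    linarith

theorem frechet_hazard_bound (α : ℝ) (hα : 1 < α) (x : ℝ) (hx : 0 < x) :
    α * x ^ (-α - 1) * Real.exp (-x ^ (-α)) / (1 - Real.exp (-x ^ (-α))) ≤ 2 * α := by
  have ht : 0 < x ^ (-α) := rpow_pos_of_pos hx _
  have hden : 0 < x * (exp (x ^ (-α)) - 1) :=
    mul_pos hx (sub_pos.mpr (one_lt_exp_iff.mpr ht))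
  have key : x ^ (-α) ≤ 2 * x * (exp (x ^ (-α)) - 1) :=
    le_two_mul_mul_exp_sub_one hx.le ht.le (one_le_two_mul_add_mul_rpow_neg hα.le hx)
  rw [frechet_hazard_eq α hx, div_le_iff₀ hden]
  nlinarith
end

section
/- Let X_1, ..., X_N be i.i.d. random variables with P(X_1 > x) = exp(-(x+1)^{1/m} + 1) for x ≥ 0, where m ≥ 1 is a positive integer. Then E[max_i X_i] ≤ 10 · m! · (log N)^m for N ≥ e. -/
/-! By the union bound the maximum `Y` of the `X i` satisfies `P(Y > t) ≤ N P(X₁ > t)`, so the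
layer-cake formula gives `E[Y] ≤ u + N ∫_u^∞ P(X₁ > t) dt` for every cutoff `u ≥ 0`.
The substitution `t + 1 = r^m` turns the tail integral into an upper incomplete gamma function,
whose closed form at `u = a^m - 1` is `m! e^(1-a) ∑_{k<m} a^k/k!`, at most `m! e^(2-a) a^m`
when `a ≥ 1`. The cutoff `a = log N` makes `N e^(-a) = 1`, so `E[Y] ≤ (1 + e²) m! (log N)^m`. -/

open MeasureTheory ProbabilityTheory
open Real Set Filter Topology Finset
open scoped Nat

theorem hasDerivAt_sum_range_succ_pow_div_factorial (n : ℕ) (y : ℝ) :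
    HasDerivAt (fun y : ℝ => ∑ k ∈ range (n + 1), y ^ k / k !)
      (∑ k ∈ range n, y ^ k / k !) y := by
  induction n with
  | zero => simpa using hasDerivAt_const y (1 : ℝ)
  | succ n ih =>
    have hterm : HasDerivAt (fun y : ℝ => y ^ (n + 1) / (n + 1)!) (y ^ n / n !) y := by
      refine ((hasDerivAt_pow (n + 1) y).div_const ((n + 1)! : ℝ)).congr_deriv ?_
      rw [Nat.factorial_succ]
      push_cast
      field_simp
    simpa only [sum_range_succ] using ih.fun_add hterm

theorem hasDerivAt_neg_exp_neg_mul_sum_range_succ (n : ℕ) (y : ℝ) :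
    HasDerivAt (fun y : ℝ => -(exp (-y) * ∑ k ∈ range (n + 1), y ^ k / k !))
      (exp (-y) * (y ^ n / n !)) y := by
  refine ((hasDerivAt_neg' y).exp.mul
    (hasDerivAt_sum_range_succ_pow_div_factorial n y)).neg.congr_deriv ?_
  rw [sum_range_succ]
  ring

theorem tendsto_exp_neg_mul_sum_range_pow_div_factorial (n : ℕ) :
    Tendsto (fun y : ℝ => exp (-y) * ∑ k ∈ range n, y ^ k / k !) atTop (𝓝 0) := by
  have h : Tendsto (fun y : ℝ => ∑ k ∈ range n, y ^ k * exp (-y) / k !) atTop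
      (𝓝 (∑ k ∈ range n, 0 / (k ! : ℝ))) :=
    tendsto_finsetSum _ fun k _ => (tendsto_pow_mul_exp_neg_atTop_nhds_zero k).div_const _
  simp only [zero_div, sum_const_zero] at h
  refine h.congr fun y => ?_
  rw [mul_sum]
  exact sum_congr rfl fun k _ => by ring

theorem sum_range_pow_div_factorial_le {a : ℝ} (ha : 1 ≤ a) (n : ℕ) :
    ∑ k ∈ range n, a ^ k / k ! ≤ a ^ n * exp 1 := by
  calc ∑ k ∈ range n, a ^ k / k !
      ≤ ∑ k ∈ range n, a ^ n * (1 ^ k / k !) := by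
        refine sum_le_sum fun k hk => ?_
        rw [one_pow, mul_one_div]
        gcongr
        exact (mem_range.mp hk).le
    _ ≤ a ^ n * exp 1 := by
        rw [← mul_sum]
        gcongr
        exact sum_le_exp_of_nonneg zero_le_one n

noncomputable def weibullSurvival (m : ℕ) (x : ℝ) : ℝ := exp (-(x + 1) ^ ((1 : ℝ) / m) + 1)

theorem integral_Ioi_weibullSurvival {m : ℕ} (hm : m ≠ 0) {a : ℝ} (ha : 0 < a) :
    IntegrableOn (weibullSurvival m) (Ioi (a ^ m - 1)) ∧
      ∫ x in Ioi (a ^ m - 1), weibullSurvival m x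
        = m ! * exp (1 - a) * ∑ k ∈ range m, a ^ k / k ! := by
  obtain ⟨n, rfl⟩ := Nat.exists_eq_add_one.mpr (Nat.pos_of_ne_zero hm)
  set r : ℝ → ℝ := fun x => (x + 1) ^ ((n + 1 : ℕ) : ℝ)⁻¹ with hr_def
  set G : ℝ → ℝ := fun x =>
    (n + 1)! * exp 1 * -(exp (-r x) * ∑ k ∈ range (n + 1), r x ^ k / k !)
  have hG : ∀ x ∈ Ici (a ^ (n + 1) - 1), HasDerivAt G (weibullSurvival (n + 1) x) x := by
    intro x hx
    have hx1 : 0 < x + 1 := by linarith [pow_pos ha (n + 1), mem_Ici.mp hx]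
    have hr : HasDerivAt r (((n + 1 : ℕ) : ℝ)⁻¹ * (r x / (x + 1))) x := by
      simpa [hr_def, rpow_sub_one hx1.ne'] using
        ((hasDerivAt_id x).add_const 1).rpow_const (p := ((n + 1 : ℕ) : ℝ)⁻¹)
          (Or.inl hx1.ne')
    refine (((hasDerivAt_neg_exp_neg_mul_sum_range_succ n (r x)).comp x hr).const_mul
      _).congr_deriv ?_
    have hrx : r x ^ (n + 1) = x + 1 := rpow_inv_natCast_pow hx1.le n.succ_ne_zero
    have hS : weibullSurvival (n + 1) x = exp 1 * exp (-r x) := by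
      rw [weibullSurvival, one_div, ← exp_add, add_comm]
    rw [hS, Nat.factorial_succ]
    push_cast
    field_simp
    rw [← pow_succ', hrx]
  have hlim : Tendsto G atTop (𝓝 0) := by
    have hr : Tendsto r atTop atTop :=
      (tendsto_rpow_atTop (by positivity)).comp (tendsto_atTop_add_const_right atTop 1 tendsto_id)
    simpa [G, mul_neg] using
      ((tendsto_exp_neg_mul_sum_range_pow_div_factorial (n + 1)).comp hr).neg.const_mul
        ((n + 1)! * exp 1)
  have hpos : ∀ x ∈ Ioi (a ^ (n + 1) - 1), 0 ≤ weibullSurvival (n + 1) x :=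
    fun x _ => (exp_pos _).le
  refine ⟨integrableOn_Ioi_deriv_of_nonneg' hG hpos hlim, ?_⟩
  rw [integral_Ioi_of_hasDerivAt_of_nonneg' hG hpos hlim]
  have hra : r (a ^ (n + 1) - 1) = a := by
    simp only [hr_def, sub_add_cancel]
    exact pow_rpow_inv_natCast ha.le n.succ_ne_zero
  simp only [G]
  rw [hra, sub_eq_add_neg (1 : ℝ), exp_add]
  ring

theorem integral_Ioi_weibullSurvival_le {m : ℕ} (hm : m ≠ 0) {a : ℝ} (ha : 1 ≤ a) :
    ∫ x in Ioi (a ^ m - 1), weibullSurvival m x ≤ m ! * exp (2 - a) * a ^ m := by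
  rw [(integral_Ioi_weibullSurvival hm (by linarith)).2]
  calc (m ! : ℝ) * exp (1 - a) * ∑ k ∈ range m, a ^ k / k !
      ≤ m ! * exp (1 - a) * (a ^ m * exp 1) := by
        gcongr
        exact sum_range_pow_div_factorial_le ha m
    _ = m ! * exp (2 - a) * a ^ m := by
        rw [show (2 : ℝ) - a = 1 - a + 1 by ring, exp_add]
        ring

theorem integral_le_add_integral_Ioi_of_measure_lt_le {Ω : Type*} [MeasurableSpace Ω]
    {μ : Measure Ω} [IsProbabilityMeasure μ] {Y : Ω → ℝ} (hY : AEMeasurable Y μ)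
    (hY0 : 0 ≤ᵐ[μ] Y) {g : ℝ → ℝ} {u : ℝ} (hu : 0 ≤ u) (hg : IntegrableOn g (Ioi u))
    (hg0 : ∀ t ∈ Ioi u, 0 ≤ g t)
    (htail : ∀ t ∈ Ioi u, μ {ω | t < Y ω} ≤ ENNReal.ofReal (g t)) :
    ∫ ω, Y ω ∂μ ≤ u + ∫ t in Ioi u, g t := by
  have hg_int : 0 ≤ ∫ t in Ioi u, g t := setIntegral_nonneg measurableSet_Ioi hg0
  rw [integral_eq_lintegral_of_nonneg_ae hY0 hY.aestronglyMeasurable]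
  apply ENNReal.toReal_le_of_le_ofReal (by positivity)
  rw [lintegral_eq_lintegral_meas_lt μ hY0 hY, ← Ioc_union_Ioi_eq_Ioi hu,
    lintegral_union measurableSet_Ioi (Ioc_disjoint_Ioi le_rfl), ENNReal.ofReal_add hu hg_int]
  gcongr
  · calc ∫⁻ t in Ioc 0 u, μ {ω | t < Y ω} ≤ ∫⁻ _ in Ioc 0 u, 1 :=
          lintegral_mono fun _ => prob_le_one
      _ = ENNReal.ofReal u := by simp
  · calc ∫⁻ t in Ioi u, μ {ω | t < Y ω} ≤ ∫⁻ t in Ioi u, ENNReal.ofReal (g t) :=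
          setLIntegral_mono' measurableSet_Ioi htail
      _ = ENNReal.ofReal (∫ t in Ioi u, g t) :=
          (ofReal_integral_eq_lintegral_ofReal hg
            (ae_restrict_of_forall_mem measurableSet_Ioi hg0)).symm

theorem measure_lt_sup'_le_sum {Ω ι α : Type*} [MeasurableSpace Ω] [LinearOrder α]
    (μ : Measure Ω) {s : Finset ι} (hs : s.Nonempty) (X : ι → Ω → α) (t : α) :
    μ {ω | t < s.sup' hs fun i => X i ω} ≤ ∑ i ∈ s, μ {ω | t < X i ω} := by
  have hset : {ω | t < s.sup' hs fun i => X i ω} = ⋃ i ∈ s, {ω | t < X i ω} := by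
    ext ω
    simp [lt_sup'_iff]
  rw [hset]
  exact measure_biUnion_finset_le s _

theorem integral_sup'_le_add_card_mul_integral_Ioi {Ω ι : Type*} [MeasurableSpace Ω]
    {μ : Measure Ω} [IsProbabilityMeasure μ] {s : Finset ι} (hs : s.Nonempty)
    {X : ι → Ω → ℝ} (hX : ∀ i ∈ s, Measurable (X i))
    (hX0 : ∀ i ∈ s, ∀ ω, 0 ≤ X i ω)
    {g : ℝ → ℝ} {u : ℝ} (hu : 0 ≤ u) (hg : IntegrableOn g (Ioi u))
    (hg0 : ∀ t ∈ Ioi u, 0 ≤ g t)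
    (htail : ∀ i ∈ s, ∀ t ∈ Ioi u, μ {ω | t < X i ω} ≤ ENNReal.ofReal (g t)) :
    ∫ ω, (s.sup' hs fun i => X i ω) ∂μ ≤ u + #s * ∫ t in Ioi u, g t := by
  obtain ⟨i₀, hi₀⟩ := id hs
  have hY : Measurable fun ω => s.sup' hs fun i => X i ω := by
    convert Finset.measurable_sup' hs hX using 1
    ext ω
    simp [Finset.sup'_apply]
  have hY0 : ∀ ω, 0 ≤ s.sup' hs fun i => X i ω :=
    fun ω => (hX0 i₀ hi₀ ω).trans (le_sup' (fun i => X i ω) hi₀)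
  rw [← integral_const_mul]
  refine integral_le_add_integral_Ioi_of_measure_lt_le hY.aemeasurable (ae_of_all _ hY0) hu
    (hg.const_mul _) (fun t ht => mul_nonneg (Nat.cast_nonneg _) (hg0 t ht)) fun t ht => ?_
  calc μ {ω | t < s.sup' hs fun i => X i ω} ≤ ∑ i ∈ s, μ {ω | t < X i ω} :=
        measure_lt_sup'_le_sum μ hs X t
    _ ≤ ∑ _i ∈ s, ENNReal.ofReal (g t) := sum_le_sum fun i hi => htail i hi t ht
    _ = ENNReal.ofReal (#s * g t) := by
        rw [sum_const, nsmul_eq_mul, ENNReal.ofReal_mul (Nat.cast_nonneg _), ENNReal.ofReal_natCast]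

theorem weibull_max_expectation_general {Ω : Type*} [MeasureSpace Ω]
    [IsProbabilityMeasure (ℙ : Measure Ω)]
    (N : ℕ) (hN : Real.exp 1 ≤ (N : ℝ)) (hNpos : 0 < N) (m : ℕ) (hm : 1 ≤ m)
    (X : Fin N → Ω → ℝ) (hmeas : ∀ i, Measurable (X i))
    (hnonneg : ∀ i ω, 0 ≤ X i ω)
    (htail : ∀ i x, 0 ≤ x →
      ℙ {ω | x < X i ω} = ENNReal.ofReal (Real.exp (-(x + 1) ^ ((1:ℝ)/m) + 1))) :
    ∫ ω, (Finset.univ.sup' (Finset.univ_nonempty_iff.mpr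
        ⟨⟨0, hNpos⟩⟩) fun i => X i ω) ∂ℙ
      ≤ 10 * m.factorial * Real.log N ^ m := by
  set L := log N
  have hL : 1 ≤ L := by simpa using log_le_log (exp_pos 1) hN
  have hN_eq : (N : ℝ) = exp L := (exp_log (by exact_mod_cast hNpos)).symm
  have hu : 0 ≤ L ^ m - 1 := by linarith [one_le_pow₀ (n := m) hL]
  have he2 : exp 2 ≤ 9 := by
    rw [show (2 : ℝ) = 1 + 1 by norm_num, exp_add]
    nlinarith [exp_pos 1, exp_one_lt_d9]
  have hfac : (1 : ℝ) ≤ m ! := Nat.one_le_cast.mpr (Nat.factorial_pos m)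
  calc _ ≤ L ^ m - 1 + #(univ : Finset (Fin N)) * ∫ t in Ioi (L ^ m - 1), weibullSurvival m t :=
        integral_sup'_le_add_card_mul_integral_Ioi _ (fun i _ => hmeas i)
          (fun i _ => hnonneg i) hu (integral_Ioi_weibullSurvival (by omega) (by linarith)).1
          (fun t _ => (exp_pos _).le) fun i _ t ht => (htail i t (hu.trans ht.le)).le
    _ ≤ L ^ m + N * (m ! * exp (2 - L) * L ^ m) := by
        rw [card_fin]
        gcongr
        · linarith
        · exact integral_Ioi_weibullSurvival_le (by omega) hL
    _ = (1 + exp 2 * m !) * L ^ m := by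
        rw [hN_eq, show (2 : ℝ) - L = 2 + -L by ring, exp_add, exp_neg]
        field_simp
    _ ≤ 10 * m ! * L ^ m := by
        gcongr
        nlinarith

theorem weibull_max_expectation {Ω : Type*} [MeasureSpace Ω]
    [IsProbabilityMeasure (ℙ : Measure Ω)]
    (N : ℕ) (hN : Real.exp 1 ≤ (N : ℝ)) (hNpos : 0 < N) (m : ℕ) (hm : 1 ≤ m)
    (X : Fin N → Ω → ℝ) (hmeas : ∀ i, Measurable (X i))
    (hnonneg : ∀ i ω, 0 ≤ X i ω)
    (hindep : iIndepFun X ℙ)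
    (htail : ∀ i x, 0 ≤ x →
      ℙ {ω | x < X i ω} = ENNReal.ofReal (Real.exp (-(x + 1) ^ ((1:ℝ)/m) + 1))) :
    ∫ ω, (Finset.univ.sup' (Finset.univ_nonempty_iff.mpr
        ⟨⟨0, hNpos⟩⟩) fun i => X i ω) ∂ℙ
      ≤ 10 * m.factorial * Real.log N ^ m :=
  weibull_max_expectation_general N hN hNpos m hm X hmeas hnonneg htail
end
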